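/- arXiv:1902.06471 — 2 statements merged into one kernel-verified Lean document; each statement's English description precedes it below -/
import Mathlib

section
/- Let a, b, c be Boolean values and consider the nine clauses ¬a, ¬b, ¬c, ¬a∨¬b, ¬b∨¬c, ¬a∨¬c, a∨b, b∨c, a∨c. Then exactly 7 of these clauses are satisfied if and only if exactly one of a, b, c is true; if none, two, or three of a, b, c are true then exactly 6 or fewer are satisfied (specifically 6 if none or two are true, and 3 if all three are true). -/
/-- Number of satisfied clauses among the nine clauses
¬a, ¬b, ¬c, ¬a∨¬b, ¬b∨¬c, ¬a∨¬c, a∨b, b∨c, a∨c. -/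
def countSat (a b c : Bool) : ℕ :=
  ([!a, !b, !c, !a || !b, !b || !c, !a || !c, a || b, b || c, a || c]).count true

/-- Number of true values among a, b, c. -/
def numTrue (a b c : Bool) : ℕ :=
  (cond a 1 0) + (cond b 1 0) + (cond c 1 0)

/- With k of the three variables true, a unit clause ¬x fails for the k true variables,
¬x∨¬y fails for the C(k,2) pairs of true variables and x∨y for the C(3-k,2) pairs of false
ones, so the count depends on k alone. -/
theorem countSat_eq_nine_sub (a b c : Bool) :
    countSat a b c = 9 - numTrue a b c - (numTrue a b c).choose 2
      - (3 - numTrue a b c).choose 2 := by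
  cases a <;> cases b <;> cases c <;> rfl

theorem numTrue_le_three (a b c : Bool) : numTrue a b c ≤ 3 := by
  cases a <;> cases b <;> cases c <;> decide

theorem nine_clauses_count (a b c : Bool) :
    (countSat a b c = 7 ↔ numTrue a b c = 1) ∧
    ((numTrue a b c = 0 ∨ numTrue a b c = 2) → countSat a b c = 6) ∧
    (numTrue a b c = 3 → countSat a b c = 3) := by
  rw [countSat_eq_nine_sub]
  have hk := numTrue_le_three a b c
  generalize numTrue a b c = k at hk ⊢
  interval_cases k <;> decide
end

section
/- For Boolean values a, b, c: the number of satisfied clauses among the nine clauses ¬a, ¬b, ¬c, ¬a∨¬b, ¬b∨¬c, ¬a∨¬c, a∨b, b∨c, a∨c equals 7 when exactly one of a,b,c is true, equals 6 when exactly zero or exactly two are true, and equals 3 when all three are true. In particular, the maximum possible count is 7 and it is achieved exactly on 1-in-3 assignments. -/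
def countSatOfNumTrue (k : ℕ) : ℕ :=
  (3 - k) + (3 - k.choose 2) + (3 - (3 - k).choose 2)

theorem countSat_eq_countSatOfNumTrue (a b c : Bool) :
    countSat a b c = countSatOfNumTrue (numTrue a b c) := by
  cases a <;> cases b <;> cases c <;> rfl

theorem nine_clauses_count_values (a b c : Bool) :
    (numTrue a b c = 1 → countSat a b c = 7) ∧
    ((numTrue a b c = 0 ∨ numTrue a b c = 2) → countSat a b c = 6) ∧
    (numTrue a b c = 3 → countSat a b c = 3) ∧
    countSat a b c ≤ 7 ∧
    (countSat a b c = 7 ↔ numTrue a b c = 1) := by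
  rw [countSat_eq_countSatOfNumTrue]
  have hk := numTrue_le_three a b c
  generalize numTrue a b c = k at hk ⊢
  interval_cases k <;> decide
end
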